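/- arXiv:1103.5571 — 2 statements merged into one kernel-verified Lean document; each statement's English description precedes it below -/
import Mathlib

section
/- The group G_ee with presentation ⟨x, y | x y x y⁻¹ x⁻¹ y x y x⁻¹ y⁻¹⟩ and the group G_oo with presentation ⟨x, y | x y x y x⁻¹ y⁻¹ x y⁻¹ x⁻¹ y⁻¹⟩ are not isomorphic as groups. -/
open FreeGroup

/-- The generator `x` of the free group on two generators. -/
def x : FreeGroup (Fin 2) := FreeGroup.of 0

/-- The generator `y` of the free group on two generators. -/
def y : FreeGroup (Fin 2) := FreeGroup.of 1

/-- The relator `r_ee`. -/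
def r_ee : FreeGroup (Fin 2) := x * y * x * y⁻¹ * x⁻¹ * y * x * y * x⁻¹ * y⁻¹

/-- The relator `r_oo`. -/
def r_oo : FreeGroup (Fin 2) := x * y * x * y * x⁻¹ * y⁻¹ * x * y⁻¹ * x⁻¹ * y⁻¹

/-- The group `G_ee` presented with the single relator `r_ee`. -/
def G_ee : Type := PresentedGroup ({r_ee} : Set (FreeGroup (Fin 2)))

/-- The group `G_oo` presented with the single relator `r_oo`. -/
def G_oo : Type := PresentedGroup ({r_oo} : Set (FreeGroup (Fin 2)))

noncomputable instance : Group G_ee := by unfold G_ee; infer_instance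

noncomputable instance : Group G_oo := by unfold G_oo; infer_instance

/-!
Both groups abelianise to `ℤ`, so their homomorphisms to the Frobenius group
`F₂₁ = ℤ/7 ⋊ ℤ/3` with abelian image number `21`. A homomorphism with nonabelian image exists
exactly when the Alexander polynomial has a root of order `3` in `(ℤ/7)ˣ`, i.e. `2` or `4`:
`1 - t + 2t² - t³` vanishes at `t = 4` modulo `7`, while `-t² + 3t - 1` has no such root.
Hence `G_oo` has `63` homomorphisms to `F₂₁` and `G_ee` only `21`, and the number of
homomorphisms to a fixed group is an isomorphism invariant.
-/

/-- `ZMod 7 ⋊ ZMod 3`, the generator of `ZMod 3` acting by multiplication by `2`, which has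
order `3` in `(ZMod 7)ˣ`. -/
def F21 : Type := ZMod 7 × ZMod 3

namespace F21

instance : DecidableEq F21 := inferInstanceAs (DecidableEq (ZMod 7 × ZMod 3))

instance : Fintype F21 := inferInstanceAs (Fintype (ZMod 7 × ZMod 3))

instance : Mul F21 := ⟨fun p q => (p.1 + 2 ^ p.2.val * q.1, p.2 + q.2)⟩

instance : One F21 := ⟨(0, 0)⟩

instance : Inv F21 := ⟨fun p => (-(2 ^ (-p.2).val * p.1), -p.2)⟩

theorem two_pow_val_add (a b : ZMod 3) :
    (2 : ZMod 7) ^ (a + b).val = 2 ^ a.val * 2 ^ b.val := by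
  decide +revert

instance : Group F21 := Group.ofLeftAxioms
  (fun ⟨a, α⟩ ⟨b, β⟩ ⟨c, γ⟩ => Prod.ext
    (show a + 2 ^ α.val * b + 2 ^ (α + β).val * c = a + 2 ^ α.val * (b + 2 ^ β.val * c) by
      rw [two_pow_val_add]; ring)
    (add_assoc α β γ))
  (fun ⟨a, α⟩ => Prod.ext (show 0 + 2 ^ (0 : ZMod 3).val * a = a by simp) (zero_add α))
  (fun ⟨a, α⟩ => Prod.ext (neg_add_cancel (2 ^ (-α).val * a)) (neg_add_cancel α))

end F21

section

variable {α G : Type*} [Group G]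

def PresentedGroup.homEquiv (rels : Set (FreeGroup α)) :
    (PresentedGroup rels →* G) ≃ {f : α → G // ∀ r ∈ rels, FreeGroup.lift f r = 1} where
  toFun φ := ⟨φ ∘ PresentedGroup.of, fun r hr => by
    rw [show FreeGroup.lift (φ ∘ PresentedGroup.of) = φ.comp (PresentedGroup.mk rels) from
      FreeGroup.ext_hom _ _ fun _ => by simp [PresentedGroup.of], MonoidHom.comp_apply,
      PresentedGroup.one_of_mem hr, φ.map_one]⟩
  invFun f := PresentedGroup.toGroup f.2
  left_inv φ := PresentedGroup.ext fun _ => PresentedGroup.toGroup.of _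
  right_inv f := Subtype.ext <| funext fun _ => PresentedGroup.toGroup.of _

theorem PresentedGroup.card_monoidHom_singleton (r : FreeGroup α) :
    Nat.card (PresentedGroup {r} →* G) = Nat.card {f : α → G // FreeGroup.lift f r = 1} := by
  simpa using Nat.card_congr (PresentedGroup.homEquiv (G := G) {r})

end

theorem card_monoidHom_G_ee_F21 : Nat.card (G_ee →* F21) = 21 := by
  refine (PresentedGroup.card_monoidHom_singleton r_ee).trans ?_
  rw [Nat.card_eq_fintype_card]
  decide +kernel

theorem card_monoidHom_G_oo_F21 : Nat.card (G_oo →* F21) = 63 := by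
  refine (PresentedGroup.card_monoidHom_singleton r_oo).trans ?_
  rw [Nat.card_eq_fintype_card]
  decide +kernel

theorem G_ee_not_iso_G_oo : ¬ Nonempty (G_ee ≃* G_oo) := by
  rintro ⟨e⟩
  have h := Nat.card_congr (e.monoidHomCongrLeftEquiv (N := F21))
  rw [card_monoidHom_G_ee_F21, card_monoidHom_G_oo_F21] at h
  omega
end

section
/- The group G_ee with presentation ⟨x, y | x y x y⁻¹ x⁻¹ y x y x⁻¹ y⁻¹⟩ and the group G_oe with presentation ⟨x, y | x y x y⁻¹ x⁻¹ y⁻¹ x y x⁻¹ y⁻¹⟩ are not isomorphic as groups. -/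
open FreeGroup

/-- The relator `r_oe`. -/
def r_oe : FreeGroup (Fin 2) := x * y * x * y⁻¹ * x⁻¹ * y⁻¹ * x * y * x⁻¹ * y⁻¹

/-- The group `G_oe` presented with the single relator `r_oe`. -/
def G_oe : Type := PresentedGroup ({r_oe} : Set (FreeGroup (Fin 2)))

noncomputable instance : Group G_oe := by unfold G_oe; infer_instance

/-!
The number of homomorphisms from a group to a fixed finite group is an isomorphism invariant,
and for a one-relator group it is the number of pairs in the target satisfying the relator.
Into the symmetric group `S₄` there are 48 such pairs for `r_ee` but only 24 for `r_oe`.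
The difference comes from the Alexander polynomials: modulo 2, `-t² + 3t - 1` becomes `t² + t + 1`,
the characteristic polynomial of an automorphism of order 3 of `(ℤ/2)²`, which yields maps of `G_ee`
onto `A₄ ≤ S₄`, whereas `2 - 2t + t²` becomes `t²` and yields none for `G_oe`.
-/

namespace PresentedGroup

variable {α G : Type*} [Group G] {rels : Set (FreeGroup α)}

theorem lift_comp_of_eq_one (φ : PresentedGroup rels →* G) {r : FreeGroup α} (hr : r ∈ rels) :
    FreeGroup.lift (fun a => φ (of a)) r = 1 := by
  have hlift : FreeGroup.lift (fun a => φ (of a)) = φ.comp (mk rels) :=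
    FreeGroup.ext_hom _ _ fun _ => FreeGroup.lift_apply_of
  rw [hlift, MonoidHom.comp_apply, one_of_mem hr, _root_.map_one]

def homEquiv_s5 (rels : Set (FreeGroup α)) :
    (PresentedGroup rels →* G) ≃ {f : α → G // ∀ r ∈ rels, FreeGroup.lift f r = 1} where
  toFun φ := ⟨fun a => φ (of a), fun _ => lift_comp_of_eq_one φ⟩
  invFun f := toGroup f.2
  left_inv _ := ext fun _ => toGroup.of _
  right_inv f := Subtype.ext <| funext fun _ => toGroup.of f.2

theorem card_hom_singleton (r : FreeGroup α) :
    Nat.card (PresentedGroup {r} →* G) = Nat.card {f : α → G // FreeGroup.lift f r = 1} := by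
  rw [Nat.card_congr (homEquiv_s5 {r})]
  simp only [Set.mem_singleton_iff, forall_eq]

end PresentedGroup

set_option maxRecDepth 10000 in
theorem card_hom_G_ee_perm_four : Nat.card (G_ee →* Equiv.Perm (Fin 4)) = 48 := by
  refine (PresentedGroup.card_hom_singleton r_ee).trans ?_
  rw [Nat.card_eq_fintype_card]
  decide

set_option maxRecDepth 10000 in
theorem card_hom_G_oe_perm_four : Nat.card (G_oe →* Equiv.Perm (Fin 4)) = 24 := by
  refine (PresentedGroup.card_hom_singleton r_oe).trans ?_
  rw [Nat.card_eq_fintype_card]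
  decide

theorem G_ee_not_iso_G_oe : ¬ Nonempty (G_ee ≃* G_oe) := by
  rintro ⟨e⟩
  have hcard := Nat.card_congr (e.monoidHomCongrLeftEquiv (N := Equiv.Perm (Fin 4)))
  rw [card_hom_G_ee_perm_four, card_hom_G_oe_perm_four] at hcard
  omega
end
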